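/- Let X be a set, T a bounded operator on ℓ²(X), and ω a countably incomplete ultrafilter on I, with T^ω the induced operator on the metric ultrapower (ℓ²(X))^ω. Then ℓ²(X^ω) (embedded in (ℓ²(X))^ω via δ_{[x_i]} ↦ [δ_{x_i}]) is an invariant subspace of T^ω if and only if: for every ε > 0 there exists M > 0 such that for every x ∈ X there is v ∈ ℓ²(X) with #supp(v) ≤ M and ‖Tδ_x − v‖ < ε. -/

import Mathlib

/-!
If every `Tδ_x` is `ε`-close to a vector supported on `M` points, then for a family of Diracs
`δ_{y_i}` the images `Tδ_{y_i}` are `ε`-close to combinations of `M` Diracs with uniformly bounded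
coefficients. Along `ω` these coefficients converge (a ball in `ℂ^M` is compact), so
`T^ω[δ_{y_i}] ∈ ℓ²(X^ω)`; since `ℓ²(X^ω)` is a closed subspace and `T^ω` is bounded and linear,
it follows for every element of `ℓ²(X^ω)`.

Conversely, if the approximation fails for some `ε`, choose `x_M` that is `ε`-far from all vectors
supported on `M` points. Countable incompleteness gives `g : I → ℕ` tending to infinity along `ω`.
The image of `[δ_{x_{g i}}] ∈ ℓ²(X^ω)` would be `ε/2`-approximated by combinations of some fixed
number `n` of Diracs, which is impossible once `g i ≥ n`.
-/

noncomputable section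
open scoped ENNReal
open Filter

/-- The Hilbert space ℓ²(X). -/
abbrev L2 (X : Type*) := lp (fun _ : X => ℂ) 2

/-- The Dirac function δ_x ∈ ℓ²(X). -/
noncomputable def dirac {X : Type*} (x : X) : L2 X := by
  classical exact lp.single 2 x 1

/-- Membership of (the germ of) a bounded family v : I → ℓ²(X) in the subspace
ℓ²(X^ω) of the metric ultrapower (ℓ²(X))^ω: v is ω-approximable by finite linear
combinations of the germ Dirac vectors [δ_{x_i}]. -/
def MemL2Ultrapower {X I : Type*} (ω : Ultrafilter I) (v : I → L2 X) : Prop :=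
  ∀ ε : ℝ, 0 < ε → ∃ (n : ℕ) (x : Fin n → I → X) (a : Fin n → ℂ),
    ∀ᶠ i in (ω : Filter I), ‖v i - ∑ k : Fin n, a k • dirac (x k i)‖ ≤ ε

open Function Topology

section Dirac

variable {X : Type*}

theorem dirac_apply_self (x : X) : dirac x x = 1 := by
  classical exact lp.single_apply_self 2 x 1

theorem dirac_apply_of_ne {x y : X} (h : y ≠ x) : dirac x y = 0 := by
  classical exact lp.single_apply_ne 2 x 1 h

@[simp]
theorem norm_dirac (x : X) : ‖dirac x‖ = 1 := by
  classical simp [dirac, lp.norm_single (E := fun _ : X => ℂ) (by norm_num : (0 : ℝ≥0∞) < 2)]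

theorem sum_smul_dirac_apply {ι : Type*} (s : Finset ι) (a : ι → ℂ) (x : ι → X) (y : X) :
    (∑ k ∈ s, a k • dirac (x k) : L2 X) y = ∑ k ∈ s, a k * dirac (x k) y := by
  simp only [lp.coeFn_sum, Finset.sum_apply, lp.coeFn_smul, Pi.smul_apply, smul_eq_mul]

theorem norm_sum_smul_dirac_le {ι : Type*} (s : Finset ι) (a : ι → ℂ) (x : ι → X) :
    ‖∑ k ∈ s, a k • dirac (x k)‖ ≤ ∑ k ∈ s, ‖a k‖ :=
  (norm_sum_le _ _).trans_eq <| by simp only [norm_smul, norm_dirac, mul_one]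

theorem eq_sum_smul_dirac {v : L2 X} {s : Finset X} (hs : ∀ y ∉ s, v y = 0) :
    v = ∑ y ∈ s, v y • dirac y := by
  refine lp.ext (funext fun z => ?_)
  rw [sum_smul_dirac_apply]
  by_cases hz : z ∈ s
  · rw [Finset.sum_eq_single z (fun y _ hy => by rw [dirac_apply_of_ne hy.symm, mul_zero])
      (absurd hz), dirac_apply_self, mul_one]
  · rw [hs z hz, Finset.sum_eq_zero fun y hy => ?_]
    rw [dirac_apply_of_ne (ne_of_mem_of_not_mem hy hz).symm, mul_zero]

end Dirac

section Support

variable {X : Type*}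

def SupportCardLE (v : L2 X) (M : ℕ) : Prop :=
  ∃ s : Finset X, s.card ≤ M ∧ ∀ y ∉ s, v y = 0

theorem SupportCardLE.mono {v : L2 X} {M N : ℕ} (hv : SupportCardLE v M) (hMN : M ≤ N) :
    SupportCardLE v N :=
  let ⟨s, hs, hsv⟩ := hv
  ⟨s, hs.trans hMN, hsv⟩

theorem supportCardLE_sum_smul_dirac {ι : Type*} (s : Finset ι) (a : ι → ℂ) (x : ι → X) :
    SupportCardLE (∑ k ∈ s, a k • dirac (x k)) s.card := by
  classical
  refine ⟨s.image x, Finset.card_image_le, fun y hy => ?_⟩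
  rw [sum_smul_dirac_apply]
  refine Finset.sum_eq_zero fun k hk => ?_
  rw [dirac_apply_of_ne fun h => hy (Finset.mem_image.2 ⟨k, hk, h.symm⟩), mul_zero]

theorem SupportCardLE.exists_eq_sum_smul_dirac [Nonempty X] {v : L2 X} {M : ℕ}
    (hv : SupportCardLE v M) :
    ∃ (e : Fin M → X) (c : Fin M → ℂ), (∀ j, ‖c j‖ ≤ ‖v‖) ∧ v = ∑ j, c j • dirac (e j) := by
  classical
  obtain ⟨s, hsM, hs⟩ := hv
  obtain ⟨g⟩ : Nonempty (s ↪ Fin M) :=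
    Function.Embedding.nonempty_of_card_le (by simpa using hsM)
  refine ⟨extend g Subtype.val fun _ => Classical.arbitrary X, extend g (fun y => v y) 0,
    fun j => ?_, ?_⟩
  · by_cases h : ∃ y, g y = j
    · obtain ⟨y, rfl⟩ := h
      rw [g.injective.extend_apply]
      exact lp.norm_apply_le_norm two_ne_zero v y
    · rw [extend_apply' _ _ _ h, Pi.zero_apply, norm_zero]
      exact norm_nonneg v
  · conv_lhs => rw [eq_sum_smul_dirac hs, ← Finset.sum_coe_sort s]
    refine Fintype.sum_of_injective g g.injective _ _ (fun j hj => ?_) fun y => ?_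
    · rw [extend_apply' _ _ _ (by simpa using hj), Pi.zero_apply, zero_smul]
    · rw [g.injective.extend_apply, g.injective.extend_apply]

end Support

theorem mul_div_add_one_le {a ε : ℝ} (ha : 0 ≤ a) (hε : 0 ≤ ε) : a * (ε / (a + 1)) ≤ ε := by
  rw [mul_div_assoc', div_le_iff₀ (by positivity)]
  nlinarith

section Ultrapower

variable {X I : Type*} (ω : Ultrafilter I)

variable (X) in
def l2Ultrapower : Submodule ℂ (I → L2 X) where
  carrier := {v | MemL2Ultrapower ω v}
  zero_mem' ε hε := ⟨0, finZeroElim, finZeroElim, by simp [hε.le]⟩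
  add_mem' := by
    intro v w hv hw ε hε
    obtain ⟨n, x, a, hvx⟩ := hv (ε / 2) (by positivity)
    obtain ⟨m, y, b, hwy⟩ := hw (ε / 2) (by positivity)
    refine ⟨n + m, Fin.append x y, Fin.append a b, (hvx.and hwy).mono fun i hi => ?_⟩
    rw [Fin.sum_univ_add]
    simp only [Fin.append_left, Fin.append_right, Pi.add_apply]
    calc _ = ‖(v i - ∑ k, a k • dirac (x k i)) + (w i - ∑ k, b k • dirac (y k i))‖ := by
            rw [add_sub_add_comm]
      _ ≤ ε := (norm_add_le _ _).trans (by linarith [hi.1, hi.2])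
  smul_mem' := by
    intro c v hv ε hε
    obtain ⟨n, x, a, hvx⟩ := hv (ε / (‖c‖ + 1)) (by positivity)
    refine ⟨n, x, fun k => c * a k, hvx.mono fun i hi => ?_⟩
    simp only [Pi.smul_apply, mul_smul, ← Finset.smul_sum, ← smul_sub, norm_smul]
    calc ‖c‖ * _ ≤ ‖c‖ * (ε / (‖c‖ + 1)) := by gcongr
      _ ≤ ε := mul_div_add_one_le (norm_nonneg c) hε.le

theorem mem_l2Ultrapower_iff {v : I → L2 X} : v ∈ l2Ultrapower X ω ↔ MemL2Ultrapower ω v :=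
  Iff.rfl

theorem memL2Ultrapower_dirac (x : I → X) : MemL2Ultrapower ω fun i => dirac (x i) :=
  fun _ hε => ⟨1, fun _ => x, fun _ => 1, .of_forall fun _ => by simp [hε.le]⟩

theorem memL2Ultrapower_of_forall_approx {v : I → L2 X}
    (h : ∀ ε : ℝ, 0 < ε → ∃ w, MemL2Ultrapower ω w ∧ ∀ᶠ i in (ω : Filter I), ‖v i - w i‖ ≤ ε) :
    MemL2Ultrapower ω v := by
  intro ε hε
  obtain ⟨w, hw, hvw⟩ := h (ε / 2) (by positivity)
  obtain ⟨n, x, a, hwx⟩ := hw (ε / 2) (by positivity)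
  refine ⟨n, x, a, (hvw.and hwx).mono fun i hi => ?_⟩
  linarith [norm_sub_le_norm_sub_add_norm_sub (v i) (w i) (∑ k, a k • dirac (x k i))]

theorem memL2Ultrapower_sum_smul_dirac_of_bounded {M : ℕ} (c : I → Fin M → ℂ)
    (e : I → Fin M → X) {R : ℝ} (hc : ∀ i j, ‖c i j‖ ≤ R) :
    MemL2Ultrapower ω fun i => ∑ j, c i j • dirac (e i j) := by
  obtain ⟨b, -, hb⟩ := (isCompact_closedBall (0 : Fin M → ℂ) (max R 0)).ultrafilter_le_nhds'
    (ω.map c) (Ultrafilter.mem_map.2 <| univ_mem' fun i => by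
      rw [Set.mem_preimage, mem_closedBall_zero_iff, pi_norm_le_iff_of_nonneg (le_max_right R 0)]
      exact fun j => (hc i j).trans (le_max_left R 0))
  have hlim : Tendsto (fun i => M * ‖c i - b‖) ω (𝓝 0) := by
    simpa using (tendsto_iff_norm_sub_tendsto_zero.1 hb).const_mul (M : ℝ)
  intro ε hε
  refine ⟨M, fun j i => e i j, b, (hlim.eventually_lt_const hε).mono fun i hi => ?_⟩
  calc _ = ‖∑ j, (c i j - b j) • dirac (e i j)‖ := by
        simp only [← Finset.sum_sub_distrib, sub_smul]
    _ ≤ ∑ j, ‖c i j - b j‖ := norm_sum_smul_dirac_le _ _ _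
    _ ≤ ∑ _j : Fin M, ‖c i - b‖ := Finset.sum_le_sum fun j _ => norm_le_pi_norm (c i - b) j
    _ ≤ ε := by simpa using hi.le

theorem memL2Ultrapower_of_bounded_of_supportCardLE {w : I → L2 X} {R : ℝ} {M : ℕ}
    (hR : ∀ i, ‖w i‖ ≤ R) (hM : ∀ i, SupportCardLE (w i) M) : MemL2Ultrapower ω w := by
  rcases isEmpty_or_nonempty X with hX | hX
  · have : w = 0 := funext fun i => lp.ext (funext isEmptyElim)
    exact this ▸ (l2Ultrapower X ω).zero_mem
  choose e c hc hw using fun i => (hM i).exists_eq_sum_smul_dirac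
  rw [show w = _ from funext hw]
  exact memL2Ultrapower_sum_smul_dirac_of_bounded ω c e fun i j => (hc i j).trans (hR i)

end Ultrapower

theorem Ultrafilter.exists_tendsto_atTop_of_iUnion_eq_univ {I : Type*} (ω : Ultrafilter I)
    {In : ℕ → Set I} (hcover : ⋃ n, In n = Set.univ) (hIn : ∀ n, In n ∉ ω) :
    ∃ g : I → ℕ, Tendsto g ω atTop := by
  choose g hg using fun i => Set.mem_iUnion.1 (hcover ▸ Set.mem_univ i)
  refine ⟨g, Nat.cofinite_eq_atTop ▸ le_cofinite_iff_compl_singleton_mem.2 fun n => ?_⟩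
  exact Ultrafilter.compl_mem_iff_notMem.2 fun h =>
    hIn n (mem_of_superset h fun i (hi : g i = n) => hi ▸ hg i)

section Operator

variable {X I : Type*} {ω : Ultrafilter I}

def HasUniformFiniteSupportApprox (T : L2 X →L[ℂ] L2 X) : Prop :=
  ∀ ε : ℝ, 0 < ε → ∃ M : ℕ, ∀ x : X, ∃ v : L2 X, SupportCardLE v M ∧ ‖T (dirac x) - v‖ < ε

namespace HasUniformFiniteSupportApprox

variable {T : L2 X →L[ℂ] L2 X}

theorem memL2Ultrapower_map_dirac (hT : HasUniformFiniteSupportApprox T) (x : I → X) :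
    MemL2Ultrapower ω fun i => T (dirac (x i)) := by
  refine memL2Ultrapower_of_forall_approx ω fun ε hε => ?_
  obtain ⟨M, hM⟩ := hT ε hε
  choose w hwM hTw using hM
  have hw : ∀ y, ‖w y‖ ≤ ‖T‖ + ε := fun y => calc
    ‖w y‖ ≤ ‖T (dirac y)‖ + ‖T (dirac y) - w y‖ := norm_le_insert _ _
    _ ≤ ‖T‖ + ε := add_le_add (by simpa using T.le_opNorm (dirac y)) (hTw y).le
  exact ⟨fun i => w (x i), memL2Ultrapower_of_bounded_of_supportCardLE ω (fun i => hw (x i))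
    (fun i => hwM (x i)), .of_forall fun i => (hTw (x i)).le⟩

theorem memL2Ultrapower_map (hT : HasUniformFiniteSupportApprox T) {v : I → L2 X}
    (hv : MemL2Ultrapower ω v) :
    MemL2Ultrapower ω fun i => T (v i) := by
  refine memL2Ultrapower_of_forall_approx ω fun ε hε => ?_
  obtain ⟨n, x, a, hvx⟩ := hv (ε / (‖T‖ + 1)) (by positivity)
  refine ⟨fun i => T (∑ k, a k • dirac (x k i)), ?_, hvx.mono fun i hi => ?_⟩
  · simp only [map_sum, map_smul, ← Finset.sum_fn]
    exact (mem_l2Ultrapower_iff ω).1 <| Submodule.sum_mem _ fun k _ =>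
      Submodule.smul_mem _ (a k) (hT.memL2Ultrapower_map_dirac (x k))
  · calc ‖T (v i) - T _‖ = ‖T (v i - ∑ k, a k • dirac (x k i))‖ := by rw [map_sub]
      _ ≤ ‖T‖ * ‖v i - ∑ k, a k • dirac (x k i)‖ := T.le_opNorm _
      _ ≤ ‖T‖ * (ε / (‖T‖ + 1)) := by gcongr
      _ ≤ ε := mul_div_add_one_le (norm_nonneg T) hε.le

end HasUniformFiniteSupportApprox

theorem hasUniformFiniteSupportApprox_of_forall_memL2Ultrapower {T : L2 X →L[ℂ] L2 X}
    {g : I → ℕ} (hg : Tendsto g ω atTop)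
    (hT : ∀ v : I → L2 X, (∃ C : ℝ, ∀ i, ‖v i‖ ≤ C) → MemL2Ultrapower ω v →
      MemL2Ultrapower ω fun i => T (v i)) :
    HasUniformFiniteSupportApprox T := by
  by_contra hcon
  obtain ⟨ε, hε, hfar⟩ : ∃ ε > 0, ∀ M, ∃ x, ∀ v, SupportCardLE v M → ε ≤ ‖T (dirac x) - v‖ := by
    simpa [HasUniformFiniteSupportApprox] using hcon
  choose x hx using hfar
  obtain ⟨n, y, a, hy⟩ := hT (fun i => dirac (x (g i))) ⟨1, fun i => (norm_dirac _).le⟩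
    (memL2Ultrapower_dirac ω _) (ε / 2) (by positivity)
  obtain ⟨i, hi, hni⟩ := (hy.and (hg.eventually_ge_atTop n)).exists
  have := hx (g i) _
    ((supportCardLE_sum_smul_dirac Finset.univ a fun k => y k i).mono (by rwa [Finset.card_fin]))
  linarith

end Operator

/-- For a countably incomplete ultrafilter ω, the subspace ℓ²(X^ω) of the
metric ultrapower (ℓ²(X))^ω is invariant under T^ω if and only if T has the uniform
finite-approximation property: for each ε > 0 there is M such that every Tδ_x is within
ε of a vector supported on at most M points. -/
theorem l2Ultrapower_invariant_iff_uniform_approx {X I : Type*} (ω : Ultrafilter I)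
    (hCI : ∃ In : ℕ → Set I, (⋃ n, In n) = Set.univ ∧ Pairwise (Function.onFun Disjoint In) ∧
      ∀ n, In n ∉ ω)
    (T : L2 X →L[ℂ] L2 X) :
    (∀ v : I → L2 X, (∃ C : ℝ, ∀ i, ‖v i‖ ≤ C) → MemL2Ultrapower ω v →
      MemL2Ultrapower ω (fun i => T (v i))) ↔
    (∀ ε : ℝ, 0 < ε → ∃ M : ℕ, ∀ x : X, ∃ v : L2 X,
      (∃ s : Finset X, s.card ≤ M ∧ ∀ y ∉ s, v y = 0) ∧ ‖T (dirac x) - v‖ < ε) := by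
  obtain ⟨In, hcover, -, hIn⟩ := hCI
  obtain ⟨g, hg⟩ := ω.exists_tendsto_atTop_of_iUnion_eq_univ hcover hIn
  exact ⟨hasUniformFiniteSupportApprox_of_forall_memL2Ultrapower hg,
    fun hT _ _ hv => HasUniformFiniteSupportApprox.memL2Ultrapower_map hT hv⟩
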